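/- Let H, H', H'' be complex Hilbert spaces, let Z : H → H' have parametrix Q, let Z' : H' → H'' have parametrix Q', and let R be any parametrix of Z'∘Z : H → H''. Define continuous operators on H × H' × H'' by A₃(u,v,w) = (u − R(Z'(Z u)), 0, Z'(Z(R w)) − w), A₁(u,v,w) = (u − Q(Z u), Z(Q v) − v, 0), and A₂(u,v,w) = (0, v − Q'(Z' v), Z'(Q' w) − w). Then A₃ − A₁ − A₂ lies in [F(H × H' × H''), F(H × H' × H'')]; that is, the logarithm of the composed Fredholm morphism is additive modulo sums of commutators of finite-rank operators. -/

import Mathlib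

/-!
`R ∘ Z'` is a left parametrix of `Z` and `Z ∘ R` a right parametrix of `Z'`; since left and
right parametrices agree modulo finite rank, `K₁ = R Z' − Q` and `K₂ = Q' − Z R` have finite
rank. In block form on `H × H' × H''`, `A₃ − A₁ − A₂ = [T₁, F₁] − [T₂, F₂]`, where `T₁`, `T₂`
carry `Z`, `Z'` below the diagonal and `F₁`, `F₂` carry `K₁`, `K₂` above it. Finally `[T, F]`
lies in `[F(V), F(V)]` for every bounded `T` once `F` has finite rank: finite-dimensional
subspaces are complemented, so there is a finite-rank projection `P` with `P F = F`, and then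
`[T, F] = [T P, F] + [F T (1 − P), P]`.
-/

/-- A continuous linear map is of finite rank if its range is finite dimensional. -/
def FiniteRank {V W : Type*} [NormedAddCommGroup V] [NormedSpace ℂ V]
    [NormedAddCommGroup W] [NormedSpace ℂ W] (T : V →L[ℂ] W) : Prop :=
  FiniteDimensional ℂ (LinearMap.range (T : V →ₗ[ℂ] W))

/-- `[F(V), F(V)]`: the additive subgroup of the continuous endomorphisms of `V`
generated by commutators of finite-rank operators. -/
noncomputable def frCommutators (V : Type*) [NormedAddCommGroup V] [NormedSpace ℂ V] :
    AddSubgroup (V →L[ℂ] V) :=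
  AddSubgroup.closure
    {C | ∃ A B : V →L[ℂ] V, FiniteRank A ∧ FiniteRank B ∧ C = A.comp B - B.comp A}

/-- `Q` is a parametrix for `Z`: `Q∘Z - id` and `Z∘Q - id` are finite rank. -/
def IsParametrix {H H' : Type*} [NormedAddCommGroup H] [NormedSpace ℂ H]
    [NormedAddCommGroup H'] [NormedSpace ℂ H']
    (Z : H →L[ℂ] H') (Q : H' →L[ℂ] H) : Prop :=
  FiniteRank (Q.comp Z - ContinuousLinearMap.id ℂ H) ∧
    FiniteRank (Z.comp Q - ContinuousLinearMap.id ℂ H')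

section Ops

variable {H H' H'' : Type*} [NormedAddCommGroup H] [NormedSpace ℂ H]
  [NormedAddCommGroup H'] [NormedSpace ℂ H']
  [NormedAddCommGroup H''] [NormedSpace ℂ H'']

/-- Projection onto the first factor of `H × H' × H''`. -/
noncomputable def pr1 : (H × H' × H'') →L[ℂ] H := ContinuousLinearMap.fst ℂ H (H' × H'')

/-- Projection onto the second factor of `H × H' × H''`. -/
noncomputable def pr2 : (H × H' × H'') →L[ℂ] H' :=
  (ContinuousLinearMap.fst ℂ H' H'').comp (ContinuousLinearMap.snd ℂ H (H' × H''))

/-- Projection onto the third factor of `H × H' × H''`. -/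
noncomputable def pr3 : (H × H' × H'') →L[ℂ] H'' :=
  (ContinuousLinearMap.snd ℂ H' H'').comp (ContinuousLinearMap.snd ℂ H (H' × H''))

/-- `A₁(u,v,w) = (u − Q(Z u), Z(Q v) − v, 0)`. -/
noncomputable def opA1 (Z : H →L[ℂ] H') (Q : H' →L[ℂ] H) :
    (H × H' × H'') →L[ℂ] (H × H' × H'') :=
  (((ContinuousLinearMap.id ℂ H - Q.comp Z).comp pr1).prod
    ((((Z.comp Q - ContinuousLinearMap.id ℂ H').comp pr2)).prod
      (0 : (H × H' × H'') →L[ℂ] H'')))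

/-- `A₂(u,v,w) = (0, v − Q'(Z' v), Z'(Q' w) − w)`. -/
noncomputable def opA2 (Z' : H' →L[ℂ] H'') (Q' : H'' →L[ℂ] H') :
    (H × H' × H'') →L[ℂ] (H × H' × H'') :=
  ((0 : (H × H' × H'') →L[ℂ] H).prod
    ((((ContinuousLinearMap.id ℂ H' - Q'.comp Z').comp pr2)).prod
      ((Z'.comp Q' - ContinuousLinearMap.id ℂ H'').comp pr3)))

/-- `A₃(u,v,w) = (u − R(Z'(Z u)), 0, Z'(Z(R w)) − w)`. -/
noncomputable def opA3 (Z : H →L[ℂ] H') (Z' : H' →L[ℂ] H'') (R : H'' →L[ℂ] H) :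
    (H × H' × H'') →L[ℂ] (H × H' × H'') :=
  (((ContinuousLinearMap.id ℂ H - R.comp ((Z'.comp Z))).comp pr1).prod
    (((0 : (H × H' × H'') →L[ℂ] H')).prod
      (((Z'.comp Z).comp R - ContinuousLinearMap.id ℂ H'').comp pr3)))

end Ops

namespace FiniteRank

variable {V W X : Type*} [NormedAddCommGroup V] [NormedSpace ℂ V]
  [NormedAddCommGroup W] [NormedSpace ℂ W] [NormedAddCommGroup X] [NormedSpace ℂ X]

theorem of_range_le {T : V →L[ℂ] W} {p : Submodule ℂ W} [FiniteDimensional ℂ p]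
    (h : LinearMap.range (T : V →ₗ[ℂ] W) ≤ p) : FiniteRank T :=
  Submodule.finiteDimensional_of_le h

theorem clm_comp (S : W →L[ℂ] X) {T : V →L[ℂ] W} (hT : FiniteRank T) :
    FiniteRank (S ∘L T) := by
  have : FiniteDimensional ℂ (LinearMap.range (T : V →ₗ[ℂ] W)) := hT
  unfold FiniteRank
  rw [ContinuousLinearMap.toLinearMap_comp, LinearMap.range_comp]
  exact Module.Finite.map _ _

theorem comp_clm {S : W →L[ℂ] X} (hS : FiniteRank S) (T : V →L[ℂ] W) :
    FiniteRank (S ∘L T) :=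
  have : FiniteDimensional ℂ (LinearMap.range (S : W →ₗ[ℂ] X)) := hS
  of_range_le (LinearMap.range_comp_le_range (T : V →ₗ[ℂ] W) (S : W →ₗ[ℂ] X))

theorem sub {S T : V →L[ℂ] W} (hS : FiniteRank S) (hT : FiniteRank T) :
    FiniteRank (S - T) := by
  have : FiniteDimensional ℂ (LinearMap.range (S : V →ₗ[ℂ] W)) := hS
  have : FiniteDimensional ℂ (LinearMap.range (T : V →ₗ[ℂ] W)) := hT
  refine of_range_le (p := LinearMap.range (S : V →ₗ[ℂ] W) ⊔ LinearMap.range (T : V →ₗ[ℂ] W)) ?_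
  rw [ContinuousLinearMap.toLinearMap_sub, sub_eq_add_neg, ← LinearMap.range_neg (T : V →ₗ[ℂ] W)]
  exact LinearMap.range_add_le _ _

theorem exists_isIdempotentElem_comp_eq {F : V →L[ℂ] W} (hF : FiniteRank F) :
    ∃ P : W →L[ℂ] W, FiniteRank P ∧ IsIdempotentElem P ∧ P ∘L F = F := by
  have : FiniteDimensional ℂ (LinearMap.range (F : V →ₗ[ℂ] W)) := hF
  set p := LinearMap.range (F : V →ₗ[ℂ] W)
  obtain ⟨f, hf⟩ := Submodule.ClosedComplemented.of_finiteDimensional p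
  refine ⟨p.subtypeL ∘L f, of_range_le (p := p) ?_, ?_, ?_⟩
  · rintro _ ⟨x, rfl⟩
    exact (f x).2
  · ext x
    simp [hf]
  · ext x
    simpa using congrArg Subtype.val (hf ⟨F x, LinearMap.mem_range_self _ x⟩)

end FiniteRank

section Parametrix

variable {H H' : Type*} [NormedAddCommGroup H] [NormedSpace ℂ H]
  [NormedAddCommGroup H'] [NormedSpace ℂ H']

theorem finiteRank_sub_of_finiteRank_comp_sub_id {Z : H →L[ℂ] H'} {L Q : H' →L[ℂ] H}
    (hL : FiniteRank (L ∘L Z - ContinuousLinearMap.id ℂ H))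
    (hQ : FiniteRank (Z ∘L Q - ContinuousLinearMap.id ℂ H')) : FiniteRank (L - Q) := by
  have h : L - Q = (L ∘L Z - ContinuousLinearMap.id ℂ H) ∘L Q -
      L ∘L (Z ∘L Q - ContinuousLinearMap.id ℂ H') := by
    ext x
    simp
  rw [h]
  exact (hL.comp_clm Q).sub (hQ.clm_comp L)

end Parametrix

section Commutators

variable {V : Type*} [NormedAddCommGroup V] [NormedSpace ℂ V]

theorem lie_mem_frCommutators {A B : V →L[ℂ] V} (hA : FiniteRank A) (hB : FiniteRank B) :
    ⁅A, B⁆ ∈ frCommutators V :=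
  AddSubgroup.subset_closure ⟨A, B, hA, hB, Ring.lie_def A B⟩

theorem lie_mem_frCommutators_of_finiteRank_right (T : V →L[ℂ] V) {F : V →L[ℂ] V}
    (hF : FiniteRank F) : ⁅T, F⁆ ∈ frCommutators V := by
  obtain ⟨P, hP, hPP, hPF⟩ := hF.exists_isIdempotentElem_comp_eq
  replace hPF : P * F = F := hPF
  have h : ⁅T, F⁆ = ⁅T * P, F⁆ + ⁅F * T * (1 - P), P⁆ := by
    have hXP : F * T * (1 - P) * P = 0 := by
      rw [mul_assoc, sub_mul, one_mul, hPP.eq, sub_self, mul_zero]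
    have hPX : P * (F * T * (1 - P)) = F * T * (1 - P) := by
      rw [← mul_assoc, ← mul_assoc, hPF]
    have hTPF : T * P * F = T * F := by
      rw [mul_assoc, hPF]
    simp only [Ring.lie_def, hXP, hPX, hTPF]
    noncomm_ring
  rw [h]
  exact add_mem (lie_mem_frCommutators (hP.clm_comp T) hF)
    (lie_mem_frCommutators ((hF.comp_clm T).comp_clm (1 - P)) hP)

end Commutators

section BlockOperators

variable {H H' H'' : Type*} [NormedAddCommGroup H] [NormedSpace ℂ H]
  [NormedAddCommGroup H'] [NormedSpace ℂ H'] [NormedAddCommGroup H''] [NormedSpace ℂ H'']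

noncomputable def in1 : H →L[ℂ] (H × H' × H'') := ContinuousLinearMap.inl ℂ H (H' × H'')

noncomputable def in2 : H' →L[ℂ] (H × H' × H'') :=
  (ContinuousLinearMap.inr ℂ H (H' × H'')).comp (ContinuousLinearMap.inl ℂ H' H'')

noncomputable def in3 : H'' →L[ℂ] (H × H' × H'') :=
  (ContinuousLinearMap.inr ℂ H (H' × H'')).comp (ContinuousLinearMap.inr ℂ H' H'')

theorem opA3_sub_opA1_sub_opA2 (Z : H →L[ℂ] H') (Q : H' →L[ℂ] H) (Z' : H' →L[ℂ] H'')
    (Q' : H'' →L[ℂ] H') (R : H'' →L[ℂ] H) :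
    (opA3 Z Z' R - opA1 Z Q - opA2 Z' Q' : (H × H' × H'') →L[ℂ] (H × H' × H'')) =
      ⁅(in2 ∘L Z ∘L pr1 : (H × H' × H'') →L[ℂ] (H × H' × H'')),
          in1 ∘L (R ∘L Z' - Q) ∘L pr2⁆ -
        ⁅(in3 ∘L Z' ∘L pr2 : (H × H' × H'') →L[ℂ] (H × H' × H'')),
          in2 ∘L (Q' - Z ∘L R) ∘L pr3⁆ := by
  refine ContinuousLinearMap.ext fun ⟨u, v, w⟩ => ?_
  simp [opA1, opA2, opA3, in1, in2, in3, pr1, pr2, pr3, Ring.lie_def]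

end BlockOperators

theorem stmt3_general {H H' H'' : Type*}
    [NormedAddCommGroup H] [InnerProductSpace ℂ H]
    [NormedAddCommGroup H'] [InnerProductSpace ℂ H']
    [NormedAddCommGroup H''] [InnerProductSpace ℂ H'']
    (Z : H →L[ℂ] H') (Q : H' →L[ℂ] H)
    (Z' : H' →L[ℂ] H'') (Q' : H'' →L[ℂ] H')
    (R : H'' →L[ℂ] H)
    (hQ : IsParametrix Z Q) (hQ' : IsParametrix Z' Q')
    (hR : IsParametrix (Z'.comp Z) R) :
    opA3 Z Z' R - opA1 Z Q - opA2 Z' Q' ∈ frCommutators (H × H' × H'') := by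
  have hK₁ : FiniteRank (R ∘L Z' - Q) := finiteRank_sub_of_finiteRank_comp_sub_id hR.1 hQ.2
  have hK₂ : FiniteRank (Q' - Z ∘L R) := finiteRank_sub_of_finiteRank_comp_sub_id hQ'.1 hR.2
  have hC₁ := lie_mem_frCommutators_of_finiteRank_right
    (in2 ∘L Z ∘L pr1 : (H × H' × H'') →L[ℂ] (H × H' × H'')) ((hK₁.comp_clm pr2).clm_comp in1)
  have hC₂ := lie_mem_frCommutators_of_finiteRank_right
    (in3 ∘L Z' ∘L pr2 : (H × H' × H'') →L[ℂ] (H × H' × H'')) ((hK₂.comp_clm pr3).clm_comp in2)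
  rw [opA3_sub_opA1_sub_opA2]
  exact sub_mem hC₁ hC₂

theorem stmt3 {H H' H'' : Type*}
    [NormedAddCommGroup H] [InnerProductSpace ℂ H] [CompleteSpace H]
    [NormedAddCommGroup H'] [InnerProductSpace ℂ H'] [CompleteSpace H']
    [NormedAddCommGroup H''] [InnerProductSpace ℂ H''] [CompleteSpace H'']
    (Z : H →L[ℂ] H') (Q : H' →L[ℂ] H)
    (Z' : H' →L[ℂ] H'') (Q' : H'' →L[ℂ] H')
    (R : H'' →L[ℂ] H)
    (hQ : IsParametrix Z Q) (hQ' : IsParametrix Z' Q')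
    (hR : IsParametrix (Z'.comp Z) R) :
    opA3 Z Z' R - opA1 Z Q - opA2 Z' Q' ∈ frCommutators (H × H' × H'') :=
  stmt3_general Z Q Z' Q' R hQ hQ' hR
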